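/- (Case α ≤ β of the information-gain bound.) If α ≤ β, where α := (1/|A|) Σ_{ℓ∈A} H[X_ℓ] and β := (1/|M \ A|) Σ_{ℓ∈M\A} H[X_ℓ], then the expected information gain satisfies Ĩ(A) ≤ γ(α − β) + |A|·α ≤ |A|·α = C(A), where γ := |A|/|M|. -/

import Mathlib

open scoped BigOperators

/-- Probability that the random variable `X` takes value `x`, under pmf `p` on `Ω`. -/
noncomputable def probOf {Ω V : Type*} [Fintype Ω] (p : Ω → ℝ) (X : Ω → V) (x : V) : ℝ :=
  letI := Classical.decEq V
  ∑ ω : Ω, if X ω = x then p ω else 0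

/-- Shannon entropy `H[X]` of a random variable with finite alphabet. -/
noncomputable def entropy {Ω V : Type*} [Fintype Ω] [Fintype V] (p : Ω → ℝ) (X : Ω → V) : ℝ :=
  ∑ x : V, Real.negMulLog (probOf p X x)

/-- Conditional entropy `H[X | Y] = H[(X,Y)] - H[Y]`. -/
noncomputable def condEntropy {Ω V W : Type*} [Fintype Ω] [Fintype V] [Fintype W]
    (p : Ω → ℝ) (X : Ω → V) (Y : Ω → W) : ℝ :=
  entropy p (fun ω => (X ω, Y ω)) - entropy p Y

/-- Mutual information `I[X ; Y] = H[X] + H[Y] - H[(X,Y)]`. -/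
noncomputable def mutualInfo {Ω V W : Type*} [Fintype Ω] [Fintype V] [Fintype W]
    (p : Ω → ℝ) (X : Ω → V) (Y : Ω → W) : ℝ :=
  entropy p X + entropy p Y - entropy p (fun ω => (X ω, Y ω))

/-! Conditioning on `Y` lowers the entropy of an unobserved coordinate `X_ℓ` by at most `H[Y]`,
and `H[Y] ≤ ∑_{ℓ ∈ A} H[X_ℓ] = |A|·α` by subadditivity of entropy. Subadditivity for a pair is the
chain rule written row by row, followed by Jensen's inequality for the concave `x ↦ -x log x`
column by column. Averaging over `M \ A` gives `Ĩ(A) ≤ H̄(M) - β + |A|·α`, and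
`H̄(M) - β = γ(α - β)` because `H̄(M)` is the mixture `γα + (1 - γ)β`; the second inequality is
then `γ ≥ 0` together with `α ≤ β`. -/

open Finset Real

theorem Real.sum_negMulLog_eq_negMulLog_sum_add {ι : Type*} (s : Finset ι) (f : ι → ℝ)
    (hf : ∀ i ∈ s, 0 ≤ f i) :
    ∑ i ∈ s, negMulLog (f i) =
      negMulLog (∑ i ∈ s, f i) + (∑ i ∈ s, f i) * ∑ i ∈ s, negMulLog (f i / ∑ j ∈ s, f j) := by
  set r := ∑ i ∈ s, f i
  have hfr : ∀ i ∈ s, r * (f i / r) = f i := fun i hi ↦ mul_div_cancel_of_imp' fun hr ↦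
    (sum_eq_zero_iff_of_nonneg hf).1 hr i hi
  have hrr : (∑ i ∈ s, f i / r) * negMulLog r = negMulLog r := by
    rw [← sum_div]
    rcases eq_or_ne r 0 with hr | hr
    · simp [hr]
    · rw [div_self hr, one_mul]
  calc ∑ i ∈ s, negMulLog (f i) = ∑ i ∈ s, negMulLog (r * (f i / r)) :=
        sum_congr rfl fun i hi ↦ by rw [hfr i hi]
    _ = (∑ i ∈ s, f i / r) * negMulLog r + r * ∑ i ∈ s, negMulLog (f i / r) := by
        simp only [negMulLog_mul, sum_add_distrib, ← sum_mul, ← mul_sum]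
    _ = negMulLog r + r * ∑ i ∈ s, negMulLog (f i / r) := by rw [hrr]

theorem Real.negMulLog_sum_le {ι : Type*} (s : Finset ι) (f : ι → ℝ) (hf : ∀ i ∈ s, 0 ≤ f i) :
    negMulLog (∑ i ∈ s, f i) ≤ ∑ i ∈ s, negMulLog (f i) := by
  rw [sum_negMulLog_eq_negMulLog_sum_add s f hf]
  refine le_add_of_nonneg_right (mul_nonneg (sum_nonneg hf) (sum_nonneg fun i hi ↦ ?_))
  exact negMulLog_nonneg (div_nonneg (hf i hi) (sum_nonneg hf))
    (div_le_one_of_le₀ (single_le_sum hf hi) (sum_nonneg hf))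

theorem Real.sum_sum_negMulLog_le {V W : Type*} [Fintype V] [Fintype W] (q : V → W → ℝ)
    (hq : ∀ v w, 0 ≤ q v w) (hq1 : ∑ v, ∑ w, q v w = 1) :
    ∑ v, ∑ w, negMulLog (q v w) ≤
      ∑ v, negMulLog (∑ w, q v w) + ∑ w, negMulLog (∑ v, q v w) := by
  set r : V → ℝ := fun v ↦ ∑ w, q v w
  have hr : ∀ v, 0 ≤ r v := fun v ↦ sum_nonneg fun w _ ↦ hq v w
  have hqr : ∀ v w, r v * (q v w / r v) = q v w := fun v w ↦ mul_div_cancel_of_imp' fun h ↦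
    (sum_eq_zero_iff_of_nonneg fun w _ ↦ hq v w).1 h w (mem_univ w)
  have hjensen : ∀ w, ∑ v, r v * negMulLog (q v w / r v) ≤ negMulLog (∑ v, q v w) := fun w ↦ by
    simpa only [smul_eq_mul, hqr] using concaveOn_negMulLog.le_map_sum (fun v _ ↦ hr v) hq1
      fun v _ ↦ Set.mem_Ici.2 (div_nonneg (hq v w) (hr v))
  calc ∑ v, ∑ w, negMulLog (q v w)
      = ∑ v, negMulLog (r v) + ∑ w, ∑ v, r v * negMulLog (q v w / r v) := by
        simp_rw [sum_negMulLog_eq_negMulLog_sum_add _ _ fun w _ ↦ hq _ w, sum_add_distrib, mul_sum]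
        rw [sum_comm]
    _ ≤ ∑ v, negMulLog (r v) + ∑ w, negMulLog (∑ v, q v w) :=
        add_le_add_right (sum_le_sum fun w _ ↦ hjensen w) _

section
variable {Ω V W : Type*} [Fintype Ω] {p : Ω → ℝ}

theorem probOf_nonneg (hp0 : ∀ ω, 0 ≤ p ω) (X : Ω → V) (x : V) : 0 ≤ probOf p X x :=
  sum_nonneg fun ω _ ↦ by split_ifs <;> simp [hp0 ω]

theorem sum_probOf [Fintype V] (X : Ω → V) : ∑ x, probOf p X x = ∑ ω, p ω := by
  unfold probOf
  rw [sum_comm]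
  simp

theorem probOf_comp [Fintype V] [DecidableEq W] (X : Ω → V) (f : V → W) (w : W) :
    probOf p (fun ω ↦ f (X ω)) w = ∑ x with f x = w, probOf p X x := by
  unfold probOf
  rw [sum_comm]
  refine sum_congr rfl fun ω _ ↦ ?_
  simp

theorem probOf_fst [Fintype V] [Fintype W] (U : Ω → V) (Z : Ω → W) (v : V) :
    probOf p U v = ∑ w, probOf p (fun ω ↦ (U ω, Z ω)) (v, w) := by
  classical
  refine (probOf_comp (fun ω ↦ (U ω, Z ω)) Prod.fst v).trans ?_
  rw [sum_filter, Fintype.sum_prod_type, sum_comm]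
  simp

theorem probOf_snd [Fintype V] [Fintype W] (U : Ω → V) (Z : Ω → W) (w : W) :
    probOf p Z w = ∑ v, probOf p (fun ω ↦ (U ω, Z ω)) (v, w) := by
  classical
  refine (probOf_comp (fun ω ↦ (U ω, Z ω)) Prod.snd w).trans ?_
  rw [sum_filter, Fintype.sum_prod_type]
  simp

theorem entropy_comp_le [Fintype V] [Fintype W] (hp0 : ∀ ω, 0 ≤ p ω) (X : Ω → V) (f : V → W) :
    entropy p (fun ω ↦ f (X ω)) ≤ entropy p X := by
  classical
  unfold entropy
  rw [← sum_fiberwise univ f]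
  refine sum_le_sum fun w _ ↦ ?_
  rw [probOf_comp]
  exact negMulLog_sum_le _ _ fun x _ ↦ probOf_nonneg hp0 X x

theorem entropy_prod_le [Fintype V] [Fintype W] (hp0 : ∀ ω, 0 ≤ p ω) (hp1 : ∑ ω, p ω = 1)
    (U : Ω → V) (Z : Ω → W) :
    entropy p (fun ω ↦ (U ω, Z ω)) ≤ entropy p U + entropy p Z := by
  unfold entropy
  simp only [Fintype.sum_prod_type, probOf_fst U Z, probOf_snd U Z]
  refine sum_sum_negMulLog_le _ (fun v w ↦ probOf_nonneg hp0 _ _) ?_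
  rw [← Fintype.sum_prod_type', sum_probOf, hp1]

theorem entropy_eq_zero_of_subsingleton [Fintype V] [Subsingleton V] (hp1 : ∑ ω, p ω = 1)
    (X : Ω → V) : entropy p X = 0 := by
  refine sum_eq_zero fun x _ ↦ ?_
  have : probOf p X x = 1 := by
    rw [probOf, ← hp1]
    exact sum_congr rfl fun ω _ ↦ if_pos (Subsingleton.elim _ _)
  rw [this, negMulLog_one]

theorem entropy_sub_entropy_le_condEntropy [Fintype V] [Fintype W] (hp0 : ∀ ω, 0 ≤ p ω)
    (X : Ω → V) (Y : Ω → W) : entropy p X - entropy p Y ≤ condEntropy p X Y := by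
  have := entropy_comp_le hp0 (fun ω ↦ (X ω, Y ω)) Prod.fst
  rw [condEntropy]
  linarith

theorem entropy_pi_le_sum {ι : Type*} [DecidableEq ι] {α : ι → Type*} [∀ i, Fintype (α i)]
    (hp0 : ∀ ω, 0 ≤ p ω) (hp1 : ∑ ω, p ω = 1) (X : ∀ i, Ω → α i) (s : Finset ι) :
    entropy p (fun ω (i : s) ↦ X i ω) ≤ ∑ i ∈ s, entropy p (X i) := by
  induction s using Finset.induction_on with
  | empty => rw [entropy_eq_zero_of_subsingleton hp1, sum_empty]
  | insert i s hi ih =>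
    let g : α i × (∀ j : s, α j) → ∀ j : (insert i s : Finset ι), α j := fun z j ↦
      if h : j.1 = i then cast (congrArg α h.symm) z.1
      else z.2 ⟨j, (mem_insert.1 j.2).resolve_left h⟩
    have hg : (fun ω (j : (insert i s : Finset ι)) ↦ X j ω) =
        fun ω ↦ g (X i ω, fun j : s ↦ X j ω) := by
      funext ω ⟨j, hj⟩
      by_cases h : j = i
      · subst h; simp [g]
      · simp [g, h]
    calc _ = entropy p (fun ω ↦ g (X i ω, fun j : s ↦ X j ω)) := by rw [hg]
      _ ≤ entropy p (fun ω ↦ (X i ω, fun j : s ↦ X j ω)) := entropy_comp_le hp0 _ g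
      _ ≤ entropy p (X i) + entropy p (fun ω (j : s) ↦ X j ω) := entropy_prod_le hp0 hp1 _ _
      _ ≤ entropy p (X i) + ∑ j ∈ s, entropy p (X j) := by gcongr
      _ = ∑ j ∈ insert i s, entropy p (X j) := by rw [sum_insert hi]

end

theorem Finset.card_mul_one_div_card_mul_sum {ι : Type*} (s : Finset ι) (f : ι → ℝ) :
    (#s : ℝ) * (1 / #s * ∑ i ∈ s, f i) = ∑ i ∈ s, f i := by
  rcases s.eq_empty_or_nonempty with rfl | hs
  · simp
  · have : (#s : ℝ) ≠ 0 := by exact_mod_cast hs.card_pos.ne'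
    field_simp

theorem Finset.average_sub_average_sdiff {ι : Type*} [DecidableEq ι] {A M : Finset ι}
    (hAM : A ⊆ M) (f : ι → ℝ) :
    1 / #M * ∑ i ∈ M, f i - 1 / #(M \ A) * ∑ i ∈ M \ A, f i =
      #A / #M * (1 / #A * ∑ i ∈ A, f i - 1 / #(M \ A) * ∑ i ∈ M \ A, f i) := by
  rcases M.eq_empty_or_nonempty with rfl | hMne
  · simp [subset_empty.1 hAM]
  have hM : (#M : ℝ) = #A + #(M \ A) := by
    exact_mod_cast (card_sdiff_add_card_eq_card hAM).symm.trans (add_comm _ _)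
  have hM0 : (#M : ℝ) ≠ 0 := by exact_mod_cast hMne.card_pos.ne'
  have hA := (card_mul_one_div_card_mul_sum A f).symm
  have hD := (card_mul_one_div_card_mul_sum (M \ A) f).symm
  rw [← sum_sdiff hAM, hA, hD]
  field_simp
  rw [hM]
  ring

theorem info_gain_bound_case_le_general
    {Ω ι : Type*} [Fintype Ω] [DecidableEq ι]
    (p : Ω → ℝ) (hp0 : ∀ ω, 0 ≤ p ω) (hp1 : ∑ ω : Ω, p ω = 1)
    (M A : Finset ι) (hAM : A ⊆ M) (hMA : (M \ A).Nonempty)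
    (V : ι → Type*) [∀ ℓ, Fintype (V ℓ)]
    (X : ∀ ℓ, Ω → V ℓ) :
    -- the joint random variable of the coordinates indexed by A
    let Y : Ω → (∀ a : A, V a.1) := fun ω (a : A) => X a.1 ω
    -- immediate cost C(A)
    let C : ℝ := ∑ ℓ ∈ A, entropy p (X ℓ)
    -- state uncertainty H̄(M)
    let Hbar : ℝ := (1 / (M.card : ℝ)) * ∑ ℓ ∈ M, entropy p (X ℓ)
    -- expected information gain Ĩ(A)
    let Itilde : ℝ :=
      Hbar - (1 / ((M \ A).card : ℝ)) * ∑ ℓ ∈ M \ A, condEntropy p (X ℓ) Y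
    let α : ℝ := (1 / (A.card : ℝ)) * ∑ ℓ ∈ A, entropy p (X ℓ)
    let β : ℝ := (1 / ((M \ A).card : ℝ)) * ∑ ℓ ∈ M \ A, entropy p (X ℓ)
    let γ : ℝ := (A.card : ℝ) / (M.card : ℝ)
    α ≤ β →
      Itilde ≤ γ * (α - β) + (A.card : ℝ) * α ∧
      γ * (α - β) + (A.card : ℝ) * α ≤ (A.card : ℝ) * α ∧
      (A.card : ℝ) * α = C := by
  intro Y C Hbar Itilde α β γ hαβ
  have hα : (#A : ℝ) * α = C := card_mul_one_div_card_mul_sum A _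
  have hY : entropy p Y ≤ C := entropy_pi_le_sum hp0 hp1 X A
  have hD : (0 : ℝ) < #(M \ A) := by exact_mod_cast hMA.card_pos
  have hβ : 1 / #(M \ A) * ∑ ℓ ∈ M \ A, (entropy p (X ℓ) - C) = β - C := by
    rw [sum_sub_distrib, sum_const, nsmul_eq_mul, mul_sub, ← mul_assoc, one_div_mul_cancel hD.ne',
      one_mul]
  have hcond : 1 / #(M \ A) * ∑ ℓ ∈ M \ A, (entropy p (X ℓ) - C) ≤
      1 / #(M \ A) * ∑ ℓ ∈ M \ A, condEntropy p (X ℓ) Y :=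
    mul_le_mul_of_nonneg_left (sum_le_sum fun ℓ _ ↦ (sub_le_sub_left hY _).trans
      (entropy_sub_entropy_le_condEntropy hp0 (X ℓ) Y)) (one_div_nonneg.2 hD.le)
  have hmix : Hbar - β = γ * (α - β) := average_sub_average_sdiff hAM _
  have hγ : 0 ≤ γ := by positivity
  refine ⟨by linarith, ?_, hα⟩
  linarith [mul_nonpos_of_nonneg_of_nonpos hγ (sub_nonpos.2 hαβ)]

/-- case `α ≤ β` of the information-gain bound: if `α ≤ β` then
`Ĩ(A) ≤ γ(α − β) + |A|·α ≤ |A|·α = C(A)`. -/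
theorem info_gain_bound_case_le
    {Ω ι : Type*} [Fintype Ω] [DecidableEq ι]
    (p : Ω → ℝ) (hp0 : ∀ ω, 0 ≤ p ω) (hp1 : ∑ ω : Ω, p ω = 1)
    (M A : Finset ι) (hAM : A ⊆ M) (hA : A.Nonempty) (hMA : (M \ A).Nonempty)
    (V : ι → Type*) [∀ ℓ, Fintype (V ℓ)]
    (X : ∀ ℓ, Ω → V ℓ) :
    -- the joint random variable of the coordinates indexed by A
    let Y : Ω → (∀ a : A, V a.1) := fun ω (a : A) => X a.1 ω
    -- immediate cost C(A)
    let C : ℝ := ∑ ℓ ∈ A, entropy p (X ℓ)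
    -- state uncertainty H̄(M)
    let Hbar : ℝ := (1 / (M.card : ℝ)) * ∑ ℓ ∈ M, entropy p (X ℓ)
    -- expected information gain Ĩ(A)
    let Itilde : ℝ :=
      Hbar - (1 / ((M \ A).card : ℝ)) * ∑ ℓ ∈ M \ A, condEntropy p (X ℓ) Y
    let α : ℝ := (1 / (A.card : ℝ)) * ∑ ℓ ∈ A, entropy p (X ℓ)
    let β : ℝ := (1 / ((M \ A).card : ℝ)) * ∑ ℓ ∈ M \ A, entropy p (X ℓ)
    let γ : ℝ := (A.card : ℝ) / (M.card : ℝ)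
    α ≤ β →
      Itilde ≤ γ * (α - β) + (A.card : ℝ) * α ∧
      γ * (α - β) + (A.card : ℝ) * α ≤ (A.card : ℝ) * α ∧
      (A.card : ℝ) * α = C :=
  info_gain_bound_case_le_general p hp0 hp1 M A hAM hMA V X
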